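/- arXiv:2407.05391 — 2 statements merged into one kernel-verified Lean document; each statement's English description precedes it below -/
import Mathlib

section
/- Let S be a nonempty set and let A : S → ℝ and B : S → ℝ be functions with A(s) ≥ 0 and B(s) > 0 for every s ∈ S. Define g : S × ℝ → ℝ by g(s, y) = 2y√(A s) − y² (B s). Then a pair (s*, y*) is a global maximizer of g over S × ℝ if and only if s* is a global maximizer of the ratio s ↦ A(s)/B(s) over S and y* = √(A s*)/(B s*). In particular, sup over (s,y) of g(s,y) equals sup over s of A(s)/B(s) whenever either supremum is attained. -/
section aux

variable {S : Type*} (A B : S → ℝ)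

private lemma key (hA : ∀ s, 0 ≤ A s) (hB : ∀ s, 0 < B s) (s : S) (y : ℝ) :
    2 * y * Real.sqrt (A s) - y ^ 2 * B s
      = A s / B s - B s * (y - Real.sqrt (A s) / B s) ^ 2 := by
  have hb := (hB s).ne'
  have h : Real.sqrt (A s) ^ 2 = A s := Real.sq_sqrt (hA s)
  field_simp
  ring_nf
  nlinarith [h]

end aux

/-- Quadratic transform equivalence for single-ratio fractional programming:
with `A ≥ 0` and `B > 0` pointwise, `(s*, y*)` globally maximizes
`g(s, y) = 2y√(A s) − y²(B s)` over `S × ℝ` iff `s*` globally maximizes the ratio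
`A/B` over `S` and `y* = √(A s*)/(B s*)`; in particular the two suprema agree
whenever either is attained. -/
theorem quadratic_transform_equivalence {S : Type*} [Nonempty S]
    (A B : S → ℝ) (hA : ∀ s, 0 ≤ A s) (hB : ∀ s, 0 < B s) :
    (∀ (s' : S) (y' : ℝ),
      (∀ (s : S) (y : ℝ),
          2 * y * Real.sqrt (A s) - y ^ 2 * B s
            ≤ 2 * y' * Real.sqrt (A s') - y' ^ 2 * B s')
        ↔ ((∀ s : S, A s / B s ≤ A s' / B s')
            ∧ y' = Real.sqrt (A s') / B s')) ∧
    (((∃ z, IsGreatest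
          (Set.range fun p : S × ℝ =>
            2 * p.2 * Real.sqrt (A p.1) - p.2 ^ 2 * B p.1) z) ∨
      (∃ z, IsGreatest (Set.range fun s : S => A s / B s) z)) →
      sSup (Set.range fun p : S × ℝ =>
          2 * p.2 * Real.sqrt (A p.1) - p.2 ^ 2 * B p.1)
        = sSup (Set.range fun s : S => A s / B s)) := by
  have hkey := key A B hA hB
  -- value at the optimal y equals the ratio
  have hval : ∀ s : S, 2 * (Real.sqrt (A s) / B s) * Real.sqrt (A s)
      - (Real.sqrt (A s) / B s) ^ 2 * B s = A s / B s := by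
    intro s
    rw [hkey s]
    simp
  -- g(s,y) ≤ A s / B s always
  have hle : ∀ (s : S) (y : ℝ),
      2 * y * Real.sqrt (A s) - y ^ 2 * B s ≤ A s / B s := by
    intro s y
    rw [hkey s]
    nlinarith [sq_nonneg (y - Real.sqrt (A s) / B s), (hB s).le]
  have main : ∀ (s' : S) (y' : ℝ),
      (∀ (s : S) (y : ℝ),
          2 * y * Real.sqrt (A s) - y ^ 2 * B s
            ≤ 2 * y' * Real.sqrt (A s') - y' ^ 2 * B s')
        ↔ ((∀ s : S, A s / B s ≤ A s' / B s')
            ∧ y' = Real.sqrt (A s') / B s') := by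
    intro s' y'
    constructor
    · intro h
      have hy : y' = Real.sqrt (A s') / B s' := by
        have h1 := h s' (Real.sqrt (A s') / B s')
        rw [hval s', hkey s'] at h1
        have h2 : (y' - Real.sqrt (A s') / B s') ^ 2 ≤ 0 := by
          nlinarith [hB s']
        have h3 : y' - Real.sqrt (A s') / B s' = 0 := by
          nlinarith [sq_nonneg (y' - Real.sqrt (A s') / B s')]
        linarith
      refine ⟨fun s => ?_, hy⟩
      have h1 := h s (Real.sqrt (A s) / B s)
      rw [hval s] at h1
      calc A s / B s ≤ _ := h1
        _ ≤ A s' / B s' := hle s' y'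
    · rintro ⟨hmax, rfl⟩
      intro s y
      rw [hval s']
      exact (hle s y).trans (hmax s)
  refine ⟨main, ?_⟩
  rintro (⟨z, hz⟩ | ⟨z, hz⟩)
  · obtain ⟨⟨⟨s', y'⟩, rfl⟩, hub⟩ := hz
    have hm : ∀ (s : S) (y : ℝ), 2 * y * Real.sqrt (A s) - y ^ 2 * B s
        ≤ 2 * y' * Real.sqrt (A s') - y' ^ 2 * B s' := by
      intro s y; exact hub ⟨⟨s, y⟩, rfl⟩
    obtain ⟨hmax, hy⟩ := (main s' y').mp hm
    have hzeq : 2 * y' * Real.sqrt (A s') - y' ^ 2 * B s' = A s' / B s' := by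
      rw [hy, hval]
    have h1 : IsGreatest (Set.range fun p : S × ℝ =>
        2 * p.2 * Real.sqrt (A p.1) - p.2 ^ 2 * B p.1)
        (2 * y' * Real.sqrt (A s') - y' ^ 2 * B s') := ⟨⟨⟨s', y'⟩, rfl⟩, hub⟩
    have h2 : IsGreatest (Set.range fun s : S => A s / B s) (A s' / B s') :=
      ⟨⟨s', rfl⟩, fun x ⟨s, hs⟩ => hs ▸ hmax s⟩
    rw [h1.csSup_eq, h2.csSup_eq, hzeq]
  · obtain ⟨⟨s', rfl⟩, hub⟩ := hz
    have hmax : ∀ s : S, A s / B s ≤ A s' / B s' := fun s => hub ⟨s, rfl⟩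
    have hm := (main s' (Real.sqrt (A s') / B s')).mpr ⟨hmax, rfl⟩
    have h1 : IsGreatest (Set.range fun p : S × ℝ =>
        2 * p.2 * Real.sqrt (A p.1) - p.2 ^ 2 * B p.1)
        (2 * (Real.sqrt (A s') / B s') * Real.sqrt (A s')
          - (Real.sqrt (A s') / B s') ^ 2 * B s') :=
      ⟨⟨⟨s', Real.sqrt (A s') / B s'⟩, rfl⟩, fun x ⟨⟨s, y⟩, hs⟩ => hs ▸ hm s y⟩
    have h2 : IsGreatest (Set.range fun s : S => A s / B s) (A s' / B s') :=
      ⟨⟨s', rfl⟩, hub⟩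
    rw [h1.csSup_eq, h2.csSup_eq, hval]
end

section
/- Let M and K be positive natural numbers, let R and R̂₁, …, R̂_K be M×M complex positive semidefinite matrices such that R − Σₖ R̂ₖ is positive semidefinite, let h₁, …, h_K ∈ ℂᴹ with hₖᴴR̂ₖhₖ ≠ 0 for each k, let Γ > 0 and σ₁², …, σ_K² be reals, and suppose (1 + Γ⁻¹)·hₖᴴR̂ₖhₖ ≥ hₖᴴRhₖ + σₖ² for each k. Define R̃ₖ = (1/(hₖᴴR̂ₖhₖ)) · (R̂ₖhₖ)(R̂ₖhₖ)ᴴ. Then: (i) each R̃ₖ is positive semidefinite with rank 1; (ii) R − Σₖ R̃ₖ is positive semidefinite; and (iii) (1 + Γ⁻¹)·hₖᴴR̃ₖhₖ ≥ hₖᴴRhₖ + σₖ² for each k. Hence (R, R̃₁, …, R̃_K) is feasible for the rank-one-constrained problem and attains the same objective value as (R, R̂₁, …, R̂_K) for any objective depending only on R. -/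
/-!
For positive semidefinite `A` and `c = xᴴAx`, the quadratic form of `A - c⁻¹ (Ax)(Ax)ᴴ` at `y`
is `yᴴAy - c⁻¹ |yᴴAx|²`, which is nonnegative by the Cauchy–Schwarz inequality for the
semi-inner product `(x, y) ↦ xᴴAy`; and the rank-one part `c⁻¹ (Ax)(Ax)ᴴ` has the same quadratic
form as `A` at `x`. With `A = R̂ₖ` and `x = hₖ`, the first fact gives `Σₖ R̃ₖ ≤ Σₖ R̂ₖ ≤ R` in the
Loewner order, and the second leaves every SINR constraint unchanged.
-/

open Matrix ComplexOrder

namespace Matrix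

lemma rank_vecMulVec_eq_one {K m n : Type*} [Field K] [Fintype n] {u : m → K} {v : n → K}
    (hu : u ≠ 0) (hv : v ≠ 0) : (vecMulVec u v).rank = 1 := by
  classical
  refine le_antisymm (rank_vecMulVec_le u v) (Nat.one_le_iff_ne_zero.mpr fun h => ?_)
  rw [rank, Submodule.finrank_eq_zero, LinearMap.range_eq_bot] at h
  obtain ⟨i, hi⟩ := Function.ne_iff.mp hu
  obtain ⟨j, hj⟩ := Function.ne_iff.mp hv
  have := congr_fun (LinearMap.congr_fun h (Pi.single j 1)) i
  simp only [mulVecLin_apply, mulVec_single_one, LinearMap.zero_apply] at this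
  exact mul_ne_zero hi hj this

variable {𝕜 n : Type*} [RCLike 𝕜] [Fintype n]

lemma star_dotProduct_vecMulVec_self_star_mulVec (u y : n → 𝕜) :
    star y ⬝ᵥ vecMulVec u (star u) *ᵥ y = (‖star y ⬝ᵥ u‖ ^ 2 : ℝ) := by
  have : star u ⬝ᵥ y = star (star y ⬝ᵥ u) := by rw [← star_dotProduct]
  rw [vecMulVec_mulVec, dotProduct_smul, MulOpposite.smul_eq_mul_unop, MulOpposite.unop_op,
    this, RCLike.ofReal_pow, ← RCLike.mul_conj, RCLike.star_def]

lemma PosSemidef.norm_dotProduct_mulVec_sq_le {A : Matrix n n 𝕜} (hA : A.PosSemidef)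
    (x y : n → 𝕜) :
    ‖star y ⬝ᵥ A *ᵥ x‖ ^ 2 ≤
      RCLike.re (star x ⬝ᵥ A *ᵥ x) * RCLike.re (star y ⬝ᵥ A *ᵥ y) := by
  let := A.toSeminormedAddCommGroup hA
  let := A.toInnerProductSpace hA
  have inner_eq (a b : n → 𝕜) : inner 𝕜 a b = star a ⬝ᵥ A *ᵥ b := dotProduct_comm _ _
  have hCS := inner_mul_inner_self_le (𝕜 := 𝕜) x y
  rw [inner_eq, inner_eq, inner_eq, inner_eq, ← norm_star, star_dotProduct, star_mulVec,
    ← dotProduct_mulVec, hA.isHermitian.eq, star_star] at hCS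
  rwa [sq]

lemma IsHermitian.coe_re_star_dotProduct_mulVec_self {A : Matrix n n 𝕜} (hA : A.IsHermitian)
    (x : n → 𝕜) : (RCLike.re (star x ⬝ᵥ A *ᵥ x) : 𝕜) = star x ⬝ᵥ A *ᵥ x :=
  RCLike.conj_eq_iff_re.mp (RCLike.conj_eq_iff_im.mpr (hA.im_star_dotProduct_mulVec_self x))

/-- The rank-one Nyström approximation of `A` along `x`. -/
noncomputable def nystrom (A : Matrix n n 𝕜) (x : n → 𝕜) : Matrix n n 𝕜 :=
  (star x ⬝ᵥ A *ᵥ x)⁻¹ • vecMulVec (A *ᵥ x) (star (A *ᵥ x))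

lemma posSemidef_nystrom {A : Matrix n n 𝕜} (hA : A.PosSemidef) (x : n → 𝕜) :
    (A.nystrom x).PosSemidef :=
  (posSemidef_vecMulVec_self_star _).smul (inv_nonneg.mpr (hA.dotProduct_mulVec_nonneg x))

lemma rank_nystrom {A : Matrix n n 𝕜} {x : n → 𝕜} (hx : star x ⬝ᵥ A *ᵥ x ≠ 0) :
    (A.nystrom x).rank = 1 := by
  have hAx : A *ᵥ x ≠ 0 := fun h => hx (by rw [h, dotProduct_zero])
  rw [nystrom, ← smul_vecMulVec]
  exact rank_vecMulVec_eq_one (smul_ne_zero (inv_ne_zero hx) hAx) (star_ne_zero.mpr hAx)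

lemma IsHermitian.star_dotProduct_nystrom_mulVec_self {A : Matrix n n 𝕜} (hA : A.IsHermitian)
    (x : n → 𝕜) : star x ⬝ᵥ A.nystrom x *ᵥ x = star x ⬝ᵥ A *ᵥ x := by
  have hconj := RCLike.conj_eq_iff_re.mpr (hA.coe_re_star_dotProduct_mulVec_self x)
  rw [nystrom, smul_mulVec, dotProduct_smul, smul_eq_mul,
    star_dotProduct_vecMulVec_self_star_mulVec, RCLike.ofReal_pow, ← RCLike.mul_conj, hconj,
    ← mul_assoc, inv_mul_mul_self]

lemma PosSemidef.sub_nystrom {A : Matrix n n 𝕜} (hA : A.PosSemidef) (x : n → 𝕜) :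
    (A - A.nystrom x).PosSemidef := by
  refine .of_dotProduct_mulVec_nonneg (hA.isHermitian.sub (posSemidef_nystrom hA x).isHermitian)
    fun y => ?_
  rw [sub_mulVec, dotProduct_sub, nystrom, smul_mulVec, dotProduct_smul, smul_eq_mul,
    star_dotProduct_vecMulVec_self_star_mulVec,
    ← hA.isHermitian.coe_re_star_dotProduct_mulVec_self x,
    ← hA.isHermitian.coe_re_star_dotProduct_mulVec_self y, ← RCLike.ofReal_inv,
    ← RCLike.ofReal_mul, ← RCLike.ofReal_sub, RCLike.ofReal_nonneg, sub_nonneg]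
  have hCS := hA.norm_dotProduct_mulVec_sq_le x y
  rcases (hA.re_dotProduct_nonneg x).eq_or_lt with h0 | hpos
  -- `xᴴAx = 0` makes `nystrom A x = 0` through the junk value `0⁻¹ = 0`.
  · simpa [← h0] using hA.re_dotProduct_nonneg y
  · rwa [inv_mul_le_iff₀ hpos]

end Matrix

theorem sdr_tightness_general (M K : ℕ)
    (R : Matrix (Fin M) (Fin M) ℂ) (Rhat : Fin K → Matrix (Fin M) (Fin M) ℂ)
    (hRhat : ∀ k, (Rhat k).PosSemidef)
    (hdiff : (R - ∑ k, Rhat k).PosSemidef)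
    (h : Fin K → (Fin M → ℂ))
    (hne : ∀ k, star (h k) ⬝ᵥ (Rhat k) *ᵥ (h k) ≠ 0)
    (Γ : ℝ) (σsq : Fin K → ℝ)
    (hsinr : ∀ k, (star (h k) ⬝ᵥ R *ᵥ (h k)).re + σsq k
        ≤ (1 + Γ⁻¹) * (star (h k) ⬝ᵥ (Rhat k) *ᵥ (h k)).re) :
    let Rtil : Fin K → Matrix (Fin M) (Fin M) ℂ := fun k =>
      (star (h k) ⬝ᵥ (Rhat k) *ᵥ (h k))⁻¹ •
        Matrix.vecMulVec ((Rhat k) *ᵥ (h k)) (star ((Rhat k) *ᵥ (h k)))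
    (∀ k, (Rtil k).PosSemidef ∧ (Rtil k).rank = 1) ∧
    (R - ∑ k, Rtil k).PosSemidef ∧
    (∀ k, (star (h k) ⬝ᵥ R *ᵥ (h k)).re + σsq k
        ≤ (1 + Γ⁻¹) * (star (h k) ⬝ᵥ (Rtil k) *ᵥ (h k)).re) := by
  intro Rtil
  have hRtil (k : Fin K) : Rtil k = (Rhat k).nystrom (h k) := rfl
  simp only [hRtil]
  refine ⟨fun k => ⟨posSemidef_nystrom (hRhat k) (h k), rank_nystrom (hne k)⟩, ?_, fun k => ?_⟩
  · open MatrixOrder in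
    exact (Finset.sum_le_sum fun k _ => (hRhat k).sub_nystrom (h k)).trans (le_iff.mpr hdiff)
  · rw [(hRhat k).isHermitian.star_dotProduct_nystrom_mulVec_self]
    exact hsinr k

/-- Lemma 2 of the paper (tightness of the semidefinite relaxation): given an
optimal solution `(R, R̂₁, …, R̂_K)` of the relaxed problem, the rank-one
surrogates `R̃ₖ = (hₖᴴR̂ₖhₖ)⁻¹ (R̂ₖhₖ)(R̂ₖhₖ)ᴴ` are positive semidefinite of
rank one, keep `R − Σₖ R̃ₖ` positive semidefinite, and still satisfy the
per-user SINR constraints; hence `(R, R̃₁, …, R̃_K)` is feasible for the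
rank-one-constrained problem with the same value of any objective that depends
only on `R`. -/
theorem sdr_tightness (M K : ℕ) (hM : 0 < M) (hK : 0 < K)
    (R : Matrix (Fin M) (Fin M) ℂ) (Rhat : Fin K → Matrix (Fin M) (Fin M) ℂ)
    (hR : R.PosSemidef) (hRhat : ∀ k, (Rhat k).PosSemidef)
    (hdiff : (R - ∑ k, Rhat k).PosSemidef)
    (h : Fin K → (Fin M → ℂ))
    (hne : ∀ k, star (h k) ⬝ᵥ (Rhat k) *ᵥ (h k) ≠ 0)
    (Γ : ℝ) (hΓ : 0 < Γ) (σsq : Fin K → ℝ)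
    (hsinr : ∀ k, (star (h k) ⬝ᵥ R *ᵥ (h k)).re + σsq k
        ≤ (1 + Γ⁻¹) * (star (h k) ⬝ᵥ (Rhat k) *ᵥ (h k)).re) :
    let Rtil : Fin K → Matrix (Fin M) (Fin M) ℂ := fun k =>
      (star (h k) ⬝ᵥ (Rhat k) *ᵥ (h k))⁻¹ •
        Matrix.vecMulVec ((Rhat k) *ᵥ (h k)) (star ((Rhat k) *ᵥ (h k)))
    (∀ k, (Rtil k).PosSemidef ∧ (Rtil k).rank = 1) ∧
    (R - ∑ k, Rtil k).PosSemidef ∧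
    (∀ k, (star (h k) ⬝ᵥ R *ᵥ (h k)).re + σsq k
        ≤ (1 + Γ⁻¹) * (star (h k) ⬝ᵥ (Rtil k) *ᵥ (h k)).re) :=
  sdr_tightness_general M K R Rhat hRhat hdiff h hne Γ σsq hsinr
end
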